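/- Let H be a DAG with k vertices. Then dtd(H) ≤ ⌊k/4⌋ + 2. -/

import Mathlib

open Set

namespace DagPaper

variable {V : Type*}

/-- Adjacency of a digraph restricted to a vertex set `A`. -/
def restrAdj (Adj : V → V → Prop) (A : Set V) : V → V → Prop :=
  fun u v => u ∈ A ∧ v ∈ A ∧ Adj u v

/-- Underlying undirected (symmetrized) adjacency restricted to `A`. -/
def symAdj (Adj : V → V → Prop) (A : Set V) : V → V → Prop :=
  fun u v => restrAdj Adj A u v ∨ restrAdj Adj A v u

/-- `v` is a source (indegree zero) of the sub-DAG induced on `A`. -/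
def IsSource (Adj : V → V → Prop) (A : Set V) (v : V) : Prop :=
  v ∈ A ∧ ∀ u ∈ A, ¬ Adj u v

/-- Vertices reachable from `s` by directed paths inside `A` (including `s`). -/
def Reach (Adj : V → V → Prop) (A : Set V) (s : V) : Set V :=
  {v | Relation.ReflTransGen (restrAdj Adj A) s v}

/-- Vertices reachable from a set of vertices `S` inside `A`. -/
def ReachSet (Adj : V → V → Prop) (A : Set V) (S : Set V) : Set V :=
  ⋃ s ∈ S, Reach Adj A s

/-- Connected component of `v` in the underlying undirected graph induced on `A`. -/
def Comp (Adj : V → V → Prop) (A : Set V) (v : V) : Set V :=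
  {u | Relation.ReflTransGen (symAdj Adj A) v u}

/-- The digraph `Adj` is acyclic. -/
def Acyclic (Adj : V → V → Prop) : Prop := ∀ v, ¬ Relation.TransGen Adj v v

/-- `dtdLE Adj A n`: the sub-DAG induced on `A` admits a DAG elimination forest of
depth at most `n`: each connected component is emptied by repeatedly choosing a
source `s` and deleting `s` together with all vertices reachable from it. -/
inductive dtdLE (Adj : V → V → Prop) : Set V → ℕ → Prop where
  | empty (n : ℕ) : dtdLE Adj ∅ n
  | step (A : Set V) (n : ℕ) (s : V → V)
      (hs : ∀ v ∈ A, IsSource Adj (Comp Adj A v) (s v))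
      (h : ∀ v ∈ A, dtdLE Adj (Comp Adj A v \ Reach Adj (Comp Adj A v) (s v)) n) :
      dtdLE Adj A (n + 1)

/-- DAG treedepth of a DAG: minimum depth of a DAG elimination forest. -/
noncomputable def dtd (Adj : V → V → Prop) : ℕ := sInf {n | dtdLE Adj Set.univ n}

/-- `IsEF Adj A anc n`: there is a DAG elimination forest for the sub-DAG on `A`,
of depth at most `n`, whose ancestor relation is contained in `anc`: whenever a
source `s` is chosen as a root of a component, `anc s u` holds for every vertex
`u` remaining below it. -/
inductive IsEF (Adj : V → V → Prop) : Set V → (V → V → Prop) → ℕ → Prop where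
  | empty (anc : V → V → Prop) (n : ℕ) : IsEF Adj ∅ anc n
  | step (A : Set V) (anc : V → V → Prop) (n : ℕ) (s : V → V)
      (hs : ∀ v ∈ A, IsSource Adj (Comp Adj A v) (s v))
      (hanc : ∀ v ∈ A, ∀ u ∈ Comp Adj A v \ Reach Adj (Comp Adj A v) (s v), anc (s v) u)
      (h : ∀ v ∈ A, IsEF Adj (Comp Adj A v \ Reach Adj (Comp Adj A v) (s v)) anc n) :
      IsEF Adj A anc (n + 1)

/-- `Adj` is an acyclic orientation of the undirected simple graph `G`. -/
structure IsAcyclicOrientation (G : SimpleGraph V) (Adj : V → V → Prop) : Prop where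
  subset : ∀ u v, Adj u v → G.Adj u v
  covers : ∀ u v, G.Adj u v → Adj u v ∨ Adj v u
  antisymm : ∀ u v, Adj u v → ¬ Adj v u
  acyclic : Acyclic Adj

/-- `tdLE G A n`: the subgraph of `G` induced on `A` admits an elimination forest of
depth at most `n` (classical treedepth). -/
inductive tdLE (G : SimpleGraph V) : Set V → ℕ → Prop where
  | empty (n : ℕ) : tdLE G ∅ n
  | step (A : Set V) (n : ℕ) (r : V → V)
      (hr : ∀ v ∈ A, r v ∈ Comp G.Adj A v)
      (h : ∀ v ∈ A, tdLE G (Comp G.Adj A v \ {r v}) n) :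
      tdLE G A (n + 1)

/-- Treedepth of an undirected graph. -/
noncomputable def td (G : SimpleGraph V) : ℕ := sInf {n | tdLE G Set.univ n}

/-- `I` is a minor of `H`, via branch sets. -/
def IsMinor {W : Type*} (I : SimpleGraph W) (H : SimpleGraph V) : Prop :=
  ∃ B : W → Set V, (∀ a, (B a).Nonempty) ∧
    (∀ a, ∀ x ∈ B a, ∀ y ∈ B a,
      Relation.ReflTransGen (fun p q => p ∈ B a ∧ q ∈ B a ∧ H.Adj p q) x y) ∧
    (∀ a b, a ≠ b → Disjoint (B a) (B b)) ∧
    (∀ a b, I.Adj a b → ∃ x ∈ B a, ∃ y ∈ B b, H.Adj x y)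

/-- `I` is an induced minor of `H` (vertex deletions and edge contractions),
via branch sets. -/
def IsInducedMinor {W : Type*} (I : SimpleGraph W) (H : SimpleGraph V) : Prop :=
  ∃ B : W → Set V, (∀ a, (B a).Nonempty) ∧
    (∀ a, ∀ x ∈ B a, ∀ y ∈ B a,
      Relation.ReflTransGen (fun p q => p ∈ B a ∧ q ∈ B a ∧ H.Adj p q) x y) ∧
    (∀ a b, a ≠ b → Disjoint (B a) (B b)) ∧
    (∀ a b, a ≠ b → (I.Adj a b ↔ ∃ x ∈ B a, ∃ y ∈ B b, H.Adj x y))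

/-- `G'` is obtained from `G` by contracting the single edge `{u, v}`, with
quotient map `f`. -/
def IsEdgeContraction {W : Type*} (G : SimpleGraph V) (G' : SimpleGraph W)
    (f : V → W) (u v : V) : Prop :=
  G.Adj u v ∧ f u = f v ∧ Function.Surjective f ∧
  (∀ x y, f x = f y → x ≠ y → (x = u ∧ y = v) ∨ (x = v ∧ y = u)) ∧
  (∀ a b, G'.Adj a b ↔ a ≠ b ∧ ∃ x y, f x = a ∧ f y = b ∧ G.Adj x y)

/-- `k` lies on the (unique, in a tree) path between `i` and `j`:
every walk from `i` to `j` passes through `k`. -/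
def OnPath {ι : Type*} (T : SimpleGraph ι) (i k j : ι) : Prop :=
  ∀ p : T.Walk i j, k ∈ p.support

/-- A DAG tree decomposition of the DAG `Adj` (Bressan). -/
structure DagTreeDecomp (Adj : V → V → Prop) (ι : Type*) where
  tree : SimpleGraph ι
  conn : tree.Connected
  acyc : tree.IsAcyclic
  bags : ι → Set V
  bags_sources : ∀ i, ∀ v ∈ bags i, IsSource Adj Set.univ v
  cover : ∀ v, IsSource Adj Set.univ v → ∃ i, v ∈ bags i
  reach : ∀ i k j, OnPath tree i k j →
    ReachSet Adj Set.univ (bags i) ∩ ReachSet Adj Set.univ (bags j)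
      ⊆ ReachSet Adj Set.univ (bags k)

/-- The DAG has a DAG tree decomposition of width (max bag size) at most `w`. -/
def dtwLE (Adj : V → V → Prop) (w : ℕ) : Prop :=
  ∃ (ι : Type) (D : DagTreeDecomp Adj ι), ∀ i, (D.bags i).ncard ≤ w

/-- DAG treewidth of a DAG. -/
noncomputable def dtw (Adj : V → V → Prop) : ℕ := sInf {w | dtwLE Adj w}

/-- A tree decomposition of an undirected graph. -/
structure TreeDecomp (G : SimpleGraph V) (ι : Type*) where
  tree : SimpleGraph ι
  conn : tree.Connected
  acyc : tree.IsAcyclic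
  bags : ι → Set V
  vcover : ∀ v, ∃ i, v ∈ bags i
  ecover : ∀ u v, G.Adj u v → ∃ i, u ∈ bags i ∧ v ∈ bags i
  vconn : ∀ v i k j, v ∈ bags i → v ∈ bags j → OnPath tree i k j → v ∈ bags k

/-- `G` has a tree decomposition of width at most `w` (bags of size ≤ w + 1). -/
def twLE (G : SimpleGraph V) (w : ℕ) : Prop :=
  ∃ (ι : Type) (D : TreeDecomp G ι), ∀ i, (D.bags i).ncard ≤ w + 1

/-- Treewidth of an undirected graph. -/
noncomputable def tw (G : SimpleGraph V) : ℕ := sInf {w | twLE G w}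

/-- A generalized hypertree decomposition of the hypergraph with hyperedge set `E`. -/
structure GHD {Vh : Type*} (E : Set (Set Vh)) (ι : Type*) where
  tree : SimpleGraph ι
  conn : tree.Connected
  acyc : tree.IsAcyclic
  vbags : ι → Set Vh
  ecov : ι → Set (Set Vh)
  ecov_mem : ∀ i, ecov i ⊆ E
  edge_cover : ∀ e ∈ E, ∃ i, e ⊆ vbags i
  vconn : ∀ v i k j, v ∈ vbags i → v ∈ vbags j → OnPath tree i k j → v ∈ vbags k
  guard : ∀ i, vbags i ⊆ ⋃ e ∈ ecov i, e

/-- The hypergraph has a generalized hypertree decomposition of width at most `w`. -/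
def ghwLE {Vh : Type*} (E : Set (Set Vh)) (w : ℕ) : Prop :=
  ∃ (ι : Type) (D : GHD E ι), ∀ i, (D.ecov i).ncard ≤ w

/-- Generalized hypertree width. -/
noncomputable def ghw {Vh : Type*} (E : Set (Set Vh)) : ℕ := sInf {w | ghwLE E w}

section Helpers

variable {Adj : V → V → Prop}

lemma restrAdj_mono {A B : Set V} (h : A ⊆ B) {u v : V} (huv : restrAdj Adj A u v) :
    restrAdj Adj B u v := ⟨h huv.1, h huv.2.1, huv.2.2⟩

lemma symAdj_mono {A B : Set V} (h : A ⊆ B) {u v : V} (huv : symAdj Adj A u v) :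
    symAdj Adj B u v := huv.imp (restrAdj_mono h) (restrAdj_mono h)

lemma symAdj_symm {A : Set V} : Symmetric (symAdj Adj A) := fun _ _ h => h.symm

lemma reach_mono {A B : Set V} (h : A ⊆ B) {s : V} : Reach Adj A s ⊆ Reach Adj B s :=
  fun _ hx => Relation.ReflTransGen.mono (r := restrAdj Adj A) (p := restrAdj Adj B) (fun _ _ hab => restrAdj_mono h hab) _ _ hx

lemma mem_reach_self {A : Set V} {s : V} : s ∈ Reach Adj A s := Relation.ReflTransGen.refl

lemma reach_subset {A : Set V} {s : V} (hs : s ∈ A) : Reach Adj A s ⊆ A := by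
  intro x hx
  induction hx with
  | refl => exact hs
  | tail _ h _ => exact h.2.1

lemma reach_closed {A : Set V} {s x y : V} (hx : x ∈ Reach Adj A s)
    (hxy : restrAdj Adj A x y) : y ∈ Reach Adj A s := Relation.ReflTransGen.tail hx hxy

lemma mem_comp_self {A : Set V} {v : V} : v ∈ Comp Adj A v := Relation.ReflTransGen.refl

lemma comp_subset {A : Set V} {v : V} (hv : v ∈ A) : Comp Adj A v ⊆ A := by
  intro x hx
  induction hx with
  | refl => exact hv
  | tail _ h _ =>
      rcases h with h | h
      · exact h.2.1
      · exact h.1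

lemma comp_closed {A : Set V} {v u w : V} (hu : u ∈ Comp Adj A v)
    (h : symAdj Adj A u w) : w ∈ Comp Adj A v := Relation.ReflTransGen.tail hu h

lemma comp_eq_of_mem {A : Set V} {v u : V} (hu : u ∈ Comp Adj A v) :
    Comp Adj A u = Comp Adj A v := by
  ext x
  constructor
  · intro hx; exact Relation.ReflTransGen.trans hu hx
  · intro hx
    exact Relation.ReflTransGen.trans
      (by haveI : Std.Symm (symAdj Adj A) := ⟨fun _ _ h => symAdj_symm h⟩; exact Std.Symm.symm _ _ hu) hx

lemma comp_subset_of_closed {C X : Set V} {s₀ : V} (hs₀ : s₀ ∈ X)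
    (hX : ∀ p ∈ X, ∀ q, symAdj Adj C p q → q ∈ X) : Comp Adj C s₀ ⊆ X := by
  intro x hx
  induction hx with
  | refl => exact hs₀
  | tail _ h ih => exact hX _ ih _ h

lemma comp_comp {A : Set V} {v u : V} (hv : v ∈ A) (hu : u ∈ Comp Adj A v) :
    Comp Adj (Comp Adj A v) u = Comp Adj A v := by
  have hsub : Comp Adj A v ⊆ A := comp_subset hv
  have h1 : Comp Adj (Comp Adj A v) u ⊆ Comp Adj A v := by
    intro x hx
    induction hx with
    | refl => exact hu
    | tail _ h ih => exact comp_closed ih (symAdj_mono hsub h)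
  refine subset_antisymm h1 ?_
  intro x hx
  have hx' : x ∈ Comp Adj A u := by rw [comp_eq_of_mem hu]; exact hx
  clear hx
  induction hx' with
  | refl => exact mem_comp_self
  | @tail b c hub h ih =>
      have hb : b ∈ Comp Adj A v := h1 ih
      have hc : c ∈ Comp Adj A v := comp_closed hb h
      refine Relation.ReflTransGen.tail ih ?_
      rcases h with h | h
      · exact Or.inl ⟨hb, hc, h.2.2⟩
      · exact Or.inr ⟨hc, hb, h.2.2⟩

lemma acyclic_irrefl (hacyc : Acyclic Adj) (u : V) : ¬ Adj u u :=
  fun h => hacyc u (Relation.TransGen.single h)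

lemma exists_source [Finite V] (hacyc : Acyclic Adj) {C : Set V} (hC : C.Nonempty) :
    ∃ s, IsSource Adj C s := by
  have hirr : IsIrrefl V (Relation.TransGen (restrAdj Adj C)) :=
    ⟨fun a ha => hacyc a (Relation.TransGen.mono (r := restrAdj Adj C) (p := Adj) (fun _ _ hxy => hxy.2.2) a a ha)⟩
  have hwf := Finite.wellFounded_of_trans_of_irrefl (Relation.TransGen (restrAdj Adj C))
  obtain ⟨m, hm, hmin⟩ := hwf.has_min C hC
  exact ⟨m, hm, fun u hu hadj => hmin u hu (Relation.TransGen.single ⟨hu, hm, hadj⟩)⟩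

lemma exists_source_reaching [Finite V] (hacyc : Acyclic Adj) {C : Set V} {x : V}
    (hx : x ∈ C) : ∃ s, IsSource Adj C s ∧ x ∈ Reach Adj C s := by
  have hirr : IsIrrefl V (Relation.TransGen (restrAdj Adj C)) :=
    ⟨fun a ha => hacyc a (Relation.TransGen.mono (r := restrAdj Adj C) (p := Adj) (fun _ _ hxy => hxy.2.2) a a ha)⟩
  have hwf := Finite.wellFounded_of_trans_of_irrefl (Relation.TransGen (restrAdj Adj C))
  obtain ⟨m, hm, hmin⟩ := hwf.has_min {y | y ∈ C ∧ x ∈ Reach Adj C y} ⟨x, hx, mem_reach_self⟩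
  refine ⟨m, ⟨hm.1, fun u hu hadj => ?_⟩, hm.2⟩
  exact hmin u ⟨hu, Relation.ReflTransGen.head ⟨hu, hm.1, hadj⟩ hm.2⟩
    (Relation.TransGen.single ⟨hu, hm.1, hadj⟩)

lemma not_source_of_mem_reach {C : Set V} {s x : V} (hx : x ∈ Reach Adj C s)
    (hxs : x ≠ s) : ¬ IsSource Adj C x := by
  intro hsrc
  rcases Relation.ReflTransGen.cases_tail hx with h | ⟨c, _, hcx⟩
  · exact hxs h
  · exact hsrc.2 c hcx.1 hcx.2.2

lemma dtdLE_mono {A : Set V} {n m : ℕ} (h : dtdLE Adj A n) (hnm : n ≤ m) :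
    dtdLE Adj A m := by
  induction h generalizing m with
  | empty => exact .empty m
  | step A n s hs _ ih =>
      obtain ⟨m', rfl⟩ : ∃ m', m = m' + 1 := ⟨m - 1, by omega⟩
      exact .step A m' s hs (fun v hv => ih v hv (by omega))

lemma dtdLE_one (hacyc : Acyclic Adj) {A : Set V}
    (h : ∀ v ∈ A, ∃ s, IsSource Adj (Comp Adj A v) s ∧
      Comp Adj A v ⊆ Reach Adj (Comp Adj A v) s) : dtdLE Adj A 1 := by
  classical
  choose f hf1 hf2 using h
  refine dtdLE.step A 0 (fun v => if hv : v ∈ A then f v hv else v) ?_ ?_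
  · intro v hv
    simp only [dif_pos hv]
    exact hf1 v hv
  · intro v hv
    simp only [dif_pos hv]
    rw [Set.diff_eq_empty.mpr (hf2 v hv)]
    exact .empty 0


lemma three_le_ncard [Finite V] {X : Set V} {a b c : V} (ha : a ∈ X) (hb : b ∈ X)
    (hc : c ∈ X) (hab : a ≠ b) (hac : a ≠ c) (hbc : b ≠ c) : 3 ≤ X.ncard := by
  have hsub : ({a, b, c} : Set V) ⊆ X := by
    intro x hx
    rcases hx with rfl | rfl | rfl
    · exact ha
    · exact hb
    · exact hc
  have h3 : ({a, b, c} : Set V).ncard = 3 := by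
    rw [Set.ncard_insert_of_notMem (by simp [hab, hac]), Set.ncard_pair hbc]
  rw [← h3]
  exact Set.ncard_le_ncard hsub X.toFinite

lemma source_of_sub {B : Set V} {v s₀ u s : V} (hv : v ∈ B)
    (hu : u ∈ Comp Adj B v \ Reach Adj (Comp Adj B v) s₀)
    (hs : IsSource Adj (Comp Adj (Comp Adj B v \ Reach Adj (Comp Adj B v) s₀) u) s) :
    IsSource Adj (Comp Adj B v) s := by
  set C := Comp Adj B v with hCdef
  set R := Reach Adj C s₀ with hRdef
  set D := C \ R with hDdef
  have hDC : D ⊆ C := diff_subset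
  have hsD : s ∈ D := comp_subset hu hs.1
  refine ⟨hDC hsD, fun w hw hadj => ?_⟩
  by_cases hwD : w ∈ D
  · have hw' : w ∈ Comp Adj D u := comp_closed hs.1 (Or.inr ⟨hwD, hsD, hadj⟩)
    exact hs.2 w hw' hadj
  · have hwR : w ∈ R := by
      by_contra hnR
      exact hwD ⟨hw, hnR⟩
    have : s ∈ R := reach_closed hwR ⟨hw, hDC hsD, hadj⟩
    exact hsD.2 this

lemma isSource_of_subset {C C' : Set V} {x : V} (hsub : C' ⊆ C) (hx : x ∈ C')
    (hsrc : IsSource Adj C x) : IsSource Adj C' x :=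
  ⟨hx, fun w hw => hsrc.2 w (hsub hw)⟩

lemma comp_eq_singleton_of_no_nbr {D : Set V} {u : V}
    (h : ∀ w, ¬ symAdj Adj D u w) : Comp Adj D u = {u} := by
  apply subset_antisymm
  · intro x hx
    induction hx with
    | refl => rfl
    | @tail b c hb hbc ih =>
        have hbu : b = u := ih
        subst hbu
        exact absurd hbc (h c)
  · intro x hx
    rw [mem_singleton_iff] at hx
    subst hx
    exact mem_comp_self

lemma dtdLE_one_of_singletons (hacyc : Acyclic Adj) {D : Set V}
    (h : ∀ u ∈ D, Comp Adj D u = {u}) : dtdLE Adj D 1 := by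
  apply dtdLE_one hacyc
  intro u hu
  refine ⟨u, ?_, ?_⟩ <;> rw [h u hu]
  · refine ⟨rfl, fun w hw hadj => ?_⟩
    rw [mem_singleton_iff] at hw
    subst hw
    exact acyclic_irrefl hacyc _ hadj
  · intro x hx
    rw [mem_singleton_iff] at hx
    subst hx
    exact mem_reach_self


lemma star_comp [Finite V] (hacyc : Acyclic Adj) {B : Set V} {v : V} (hv : v ∈ B)
    (h2 : ∀ s, IsSource Adj (Comp Adj B v) s → (Reach Adj (Comp Adj B v) s).ncard ≤ 2)
    {s : V} (hs : IsSource Adj (Comp Adj B v) s) :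
    ∀ u ∈ Comp Adj B v \ Reach Adj (Comp Adj B v) s,
      Comp Adj (Comp Adj B v \ Reach Adj (Comp Adj B v) s) u = {u} := by
  intro u hu
  set C := Comp Adj B v with hC
  set R := Reach Adj C s with hR
  have hsC : s ∈ C := hs.1
  have hRC : R ⊆ C := reach_subset hsC
  rcases Set.eq_empty_or_nonempty (R \ {s}) with hemp | ⟨t, htR', hts⟩
  · -- R = {s} and C = {s} : contradiction with u ∈ C \ R
    have hRs : ∀ y ∈ R, y = s := by
      intro y hy
      by_contra hys
      exact (Set.eq_empty_iff_forall_notMem.mp hemp y) ⟨hy, hys⟩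
    have hCs : C ⊆ {s} := by
      have hstep := comp_subset_of_closed (Adj := Adj) (C := C) (X := ({s} : Set V))
        (s₀ := s) rfl ?_
      · rw [comp_comp hv hsC] at hstep; exact hstep
      · intro p hp q hq
        rw [mem_singleton_iff] at hp; subst hp
        rcases hq with hq | hq
        · exact hRs q (reach_closed mem_reach_self hq)
        · exact absurd hq.2.2 (hs.2 q hq.1)
    have : u = s := hCs hu.1
    subst this
    exact absurd mem_reach_self hu.2
  · have htR : t ∈ R := htR'
    have htsne : t ≠ s := hts
    have htC : t ∈ C := hRC htR
    have hRsub : ∀ y ∈ R, y = s ∨ y = t := by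
      intro y hy
      by_contra hcon
      push_neg at hcon
      have h3 := three_le_ncard (mem_reach_self (A := C) (s := s)) htR hy
        htsne.symm (Ne.symm hcon.1) (Ne.symm hcon.2)
      have := h2 s hs
      omega
    have ht_nonsrc : ¬ IsSource Adj C t := not_source_of_mem_reach htR htsne
    have hkey : ∀ p ∈ C, Adj p t → IsSource Adj C p := by
      intro p hp hpt
      by_contra hnsrc
      obtain ⟨σ, hσ, hpσ⟩ := exists_source_reaching hacyc hp
      have hpne : σ ≠ p := by rintro rfl; exact hnsrc hσ
      have htσ : t ∈ Reach Adj C σ := reach_closed hpσ ⟨hp, htC, hpt⟩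
      have hptne : p ≠ t := by rintro rfl; exact acyclic_irrefl hacyc p hpt
      have hσt : σ ≠ t := by rintro rfl; exact ht_nonsrc hσ
      have h3 := three_le_ncard (mem_reach_self (A := C) (s := σ)) hpσ htσ hpne hσt hptne
      have := h2 σ hσ
      omega
    have hreachp : ∀ p ∈ C, Adj p t → ∀ y ∈ Reach Adj C p, y = p ∨ y = t := by
      intro p hp hpt y hy
      by_contra hcon
      push_neg at hcon
      have hsrcp := hkey p hp hpt
      have htp : t ∈ Reach Adj C p := reach_closed mem_reach_self ⟨hp, htC, hpt⟩
      have hptne : p ≠ t := by rintro rfl; exact acyclic_irrefl hacyc p hpt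
      have h3 := three_le_ncard (mem_reach_self (A := C) (s := p)) htp hy hptne
        (Ne.symm hcon.1) (Ne.symm hcon.2)
      have := h2 p hsrcp
      omega
    set U : Set V := {s, t} ∪ {w | w ∈ C ∧ Adj w t} with hU
    have hsU : s ∈ U := Or.inl (Or.inl rfl)
    have hclosed : ∀ p ∈ U, ∀ q, symAdj Adj C p q → q ∈ U := by
      intro p hp q hq
      rw [hU, mem_union, mem_insert_iff, mem_singleton_iff] at hp
      rcases hp with (rfl | rfl) | ⟨hpC, hpt⟩
      · rcases hq with hq | hq
        · rcases hRsub q (reach_closed mem_reach_self hq) with rfl | rfl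
          · exact Or.inl (Or.inl rfl)
          · exact Or.inl (Or.inr rfl)
        · exact absurd hq.2.2 (hs.2 q hq.1)
      · rcases hq with hq | hq
        · rcases hRsub q (reach_closed htR hq) with rfl | rfl
          · exact absurd hq.2.2 (hs.2 _ hq.1)
          · exact absurd hq.2.2 (acyclic_irrefl hacyc _)
        · exact Or.inr ⟨hq.1, hq.2.2⟩
      · have hsrcp := hkey p hpC hpt
        rcases hq with hq | hq
        · rcases hreachp p hpC hpt q (reach_closed mem_reach_self hq) with rfl | rfl
          · exact absurd hq.2.2 (acyclic_irrefl hacyc _)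
          · exact Or.inl (Or.inr rfl)
        · exact absurd hq.2.2 (hsrcp.2 q hq.1)
    have hCU : C ⊆ U := by
      have hstep := comp_subset_of_closed hsU hclosed
      rw [comp_comp hv hsC] at hstep
      exact hstep
    obtain ⟨huC, hunR⟩ := hu
    have hu' := hCU huC
    rw [hU, mem_union, mem_insert_iff, mem_singleton_iff] at hu'
    rcases hu' with (rfl | rfl) | ⟨_, hut⟩
    · exact absurd mem_reach_self hunR
    · exact absurd htR hunR
    apply comp_eq_singleton_of_no_nbr
    intro w hw
    rcases hw with hw | hw
    · have hwC : w ∈ C := hw.2.1.1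
      have hwreach : w ∈ Reach Adj C u :=
        reach_closed mem_reach_self ⟨huC, hwC, hw.2.2⟩
      rcases hreachp u huC hut w hwreach with rfl | rfl
      · exact acyclic_irrefl hacyc _ hw.2.2
      · exact hw.2.1.2 htR
    · exact (hkey u huC hut).2 w hw.1.1 hw.2.2


lemma count [Finite V] (hacyc : Acyclic Adj) {B : Set V} {v : V} (hv : v ∈ B)
    (h3 : ∀ s, IsSource Adj (Comp Adj B v) s → (Reach Adj (Comp Adj B v) s).ncard ≤ 3) :
    {x | x ∈ Comp Adj B v ∧ ¬ IsSource Adj (Comp Adj B v) x}.ncard ≤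
      {x | x ∈ Comp Adj B v ∧ IsSource Adj (Comp Adj B v) x}.ncard + 1 := by
  classical
  set C := Comp Adj B v with hC
  set S : Set V := {x | x ∈ C ∧ IsSource Adj C x} with hS
  set N : Set V := {x | x ∈ C ∧ ¬ IsSource Adj C x} with hN
  set P : V → Set V := fun s => Reach Adj C s \ {s} with hP
  have hPN : ∀ s ∈ S, P s ⊆ N := by
    intro s hsS x hx
    exact ⟨reach_subset hsS.1 hx.1, not_source_of_mem_reach hx.1 hx.2⟩
  have hP2 : ∀ s ∈ S, (P s).ncard ≤ 2 := by
    intro s hsS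
    have heq := Set.ncard_diff_singleton_of_mem
      (mem_reach_self (Adj := Adj) (A := C) (s := s))
    have h3s := h3 s hsS.2
    have : (P s).ncard = (Reach Adj C s).ncard - 1 := heq
    omega
  have hcov : ∀ x ∈ N, ∃ s ∈ S, x ∈ P s := by
    intro x hx
    obtain ⟨σ, hσ, hxσ⟩ := exists_source_reaching hacyc hx.1
    refine ⟨σ, ⟨hσ.1, hσ⟩, hxσ, ?_⟩
    intro hxs
    rw [mem_singleton_iff] at hxs
    subst hxs
    exact hx.2 hσ
  have EXT : ∀ k (F : Set V), F ⊆ S → (⋃ s ∈ F, P s).Nonempty →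
      (N \ ⋃ s ∈ F, P s).ncard ≤ k → (N \ ⋃ s ∈ F, P s).ncard ≤ (S \ F).ncard := by
    intro k
    induction k with
    | zero => intro F _ _ hle; exact hle.trans (Nat.zero_le _)
    | succ k ih =>
      intro F hFS hMne hcard
      set M := ⋃ s ∈ F, P s with hM
      rcases Set.eq_empty_or_nonempty (N \ M) with hNM | hNMne
      · rw [hNM]; simp
      have hMN : M ⊆ N := Set.iUnion₂_subset fun s hs => hPN s (hFS hs)
      by_cases hex : ∃ s ∈ S, s ∉ F ∧ (P s ∩ M).Nonempty ∧ (P s \ M).Nonempty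
      · obtain ⟨s', hs'S, hs'F, hPM, hPnM⟩ := hex
        set F' := insert s' F with hF'
        set M' := ⋃ s ∈ F', P s with hM'
        have hM'eq : M' = P s' ∪ M := by
          rw [hM', hF', Set.biUnion_insert]
        have hMM' : M ⊆ M' := by rw [hM'eq]; exact subset_union_right
        have hsub : N \ M' ⊆ N \ M := diff_subset_diff_right hMM'
        obtain ⟨w, hwP, hwM⟩ := hPnM
        have hwN : w ∈ N := hPN s' hs'S hwP
        have hwin : w ∈ N \ M := ⟨hwN, hwM⟩
        have hwout : w ∉ N \ M' := by
          intro hcon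
          exact hcon.2 (by rw [hM'eq]; exact Or.inl hwP)
        have hssub : N \ M' ⊂ N \ M :=
          (Set.ssubset_iff_of_subset hsub).mpr ⟨w, hwin, hwout⟩
        have hlt : (N \ M').ncard < (N \ M).ncard :=
          Set.ncard_lt_ncard hssub (Set.toFinite _)
        have hF'S : F' ⊆ S := by
          rw [hF']
          exact insert_subset hs'S hFS
        have hM'ne : M'.Nonempty := ⟨w, by rw [hM'eq]; exact Or.inl hwP⟩
        have hIH := ih F' hF'S hM'ne (by rw [← hM']; omega)
        rw [← hM'] at hIH
        have hSlt : (S \ F').ncard < (S \ F).ncard := by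
          apply Set.ncard_lt_ncard _ (Set.toFinite _)
          refine (Set.ssubset_iff_of_subset (diff_subset_diff_right (subset_insert _ _))).mpr
            ⟨s', ⟨hs'S, hs'F⟩, ?_⟩
          intro hcon
          exact hcon.2 (mem_insert _ _)
        have hcover : N \ M ⊆ (N \ M') ∪ (P s' \ M) := by
          intro x hx
          by_cases hxM' : x ∈ M'
          · right
            rw [hM'eq] at hxM'
            rcases hxM' with hxP | hxM
            · exact ⟨hxP, hx.2⟩
            · exact absurd hxM hx.2
          · exact Or.inl ⟨hx.1, hxM'⟩
        have hP1 : (P s' \ M).ncard ≤ 1 := by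
          obtain ⟨z, hzP, hzM⟩ := hPM
          have : P s' \ M ⊂ P s' := by
            refine (Set.ssubset_iff_of_subset diff_subset).mpr ⟨z, hzP, ?_⟩
            intro hcon
            exact hcon.2 hzM
          have hlt2 := Set.ncard_lt_ncard this (Set.toFinite _)
          have := hP2 s' hs'S
          omega
        have hle1 : (N \ M).ncard ≤ (N \ M').ncard + (P s' \ M).ncard :=
          le_trans (Set.ncard_le_ncard hcover (Set.toFinite _)) (Set.ncard_union_le _ _)
        omega
      · exfalso
        have Hclose : ∀ t ∈ S, (P t ∩ M).Nonempty → P t ⊆ M := by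
          intro t htS hne
          by_cases htF : t ∈ F
          · rw [hM]
            exact Set.subset_biUnion_of_mem htF
          · by_contra hnsub
            rw [Set.not_subset] at hnsub
            obtain ⟨a, haP, haM⟩ := hnsub
            exact hex ⟨t, htS, htF, hne, a, haP, haM⟩
        set U : Set V := M ∪ {x | x ∈ S ∧ P x ⊆ M} with hU
        have hclosed : ∀ p ∈ U, ∀ q, symAdj Adj C p q → q ∈ U := by
          intro p hp q hq
          rcases hp with hpM | ⟨hpS, hpsub⟩
          · have hpN : p ∈ N := hMN hpM
            rcases hq with hq | hq
            · obtain ⟨σ, hσS, hpPσ⟩ := hcov p hpN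
              have hqR : q ∈ Reach Adj C σ := reach_closed hpPσ.1 hq
              have hqne : q ∉ ({σ} : Set V) := by
                intro hcon
                rw [mem_singleton_iff] at hcon
                subst hcon
                exact hσS.2.2 p hq.1 hq.2.2
              exact Or.inl (Hclose σ hσS ⟨p, hpPσ, hpM⟩ ⟨hqR, hqne⟩)
            · by_cases hqsrc : IsSource Adj C q
              · have hpPq : p ∈ P q := by
                  refine ⟨reach_closed mem_reach_self hq, ?_⟩
                  intro hcon
                  rw [mem_singleton_iff] at hcon
                  subst hcon
                  exact hpN.2 hqsrc
                exact Or.inr ⟨⟨hq.1, hqsrc⟩, Hclose q ⟨hq.1, hqsrc⟩ ⟨p, hpPq, hpM⟩⟩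
              · have hqN : q ∈ N := ⟨hq.1, hqsrc⟩
                obtain ⟨σ, hσS, hqPσ⟩ := hcov q hqN
                have hpR : p ∈ Reach Adj C σ := reach_closed hqPσ.1 hq
                have hpne : p ∉ ({σ} : Set V) := by
                  intro hcon
                  rw [mem_singleton_iff] at hcon
                  subst hcon
                  exact hpN.2 hσS.2
                exact Or.inl (Hclose σ hσS ⟨p, ⟨hpR, hpne⟩, hpM⟩ hqPσ)
          · rcases hq with hq | hq
            · have hqR : q ∈ Reach Adj C p := reach_closed mem_reach_self hq
              have hqne : q ∉ ({p} : Set V) := by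
                intro hcon
                rw [mem_singleton_iff] at hcon
                subst hcon
                exact acyclic_irrefl hacyc _ hq.2.2
              exact Or.inl (hpsub ⟨hqR, hqne⟩)
            · exact absurd hq.2.2 (hpS.2.2 q hq.1)
        obtain ⟨x₀, hx₀⟩ := hMne
        have hx₀N : x₀ ∈ N := hMN hx₀
        have hCsub : C ⊆ U := by
          have hseed : x₀ ∈ U := Or.inl hx₀
          have hstep := comp_subset_of_closed hseed hclosed
          rw [comp_comp hv hx₀N.1] at hstep
          exact hstep
        obtain ⟨y, hyN, hyM⟩ := hNMne
        rcases hCsub hyN.1 with hyM' | hyS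
        · exact hyM hyM'
        · exact hyN.2 hyS.1.2
  rcases Set.eq_empty_or_nonempty N with hNe | ⟨x, hxN⟩
  · rw [hNe]
    simp
  obtain ⟨σ, hσS, hxP⟩ := hcov x hxN
  have hM0 : (⋃ s ∈ ({σ} : Set V), P s) = P σ := by simp
  have hext := EXT (N \ ⋃ s ∈ ({σ} : Set V), P s).ncard {σ}
    (by intro z hz; rw [mem_singleton_iff] at hz; subst hz; exact hσS)
    (by rw [hM0]; exact ⟨x, hxP⟩) le_rfl
  rw [hM0] at hext
  have hPsubN : P σ ⊆ N := hPN σ hσS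
  have hsplit := Set.ncard_diff_add_ncard_of_subset hPsubN (Set.toFinite _)
  have hS1 : (S \ ({σ} : Set V)).ncard = S.ncard - 1 := by
    rw [← Set.ncard_diff_singleton_of_mem hσS]
  have hSpos : 1 ≤ S.ncard := (Set.ncard_pos (Set.toFinite _)).mpr ⟨σ, hσS⟩
  have hP2' := hP2 σ hσS
  omega


lemma nonsrc_sub [Finite V] {D : Set V} {v s : V} (hv : v ∈ D)
    (hsrc : IsSource Adj (Comp Adj D v) s)
    (hr3 : 3 ≤ (Reach Adj (Comp Adj D v) s).ncard) :
    ∀ u ∈ Comp Adj D v \ Reach Adj (Comp Adj D v) s,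
      {x | x ∈ Comp Adj (Comp Adj D v \ Reach Adj (Comp Adj D v) s) u ∧
        ¬ IsSource Adj (Comp Adj (Comp Adj D v \ Reach Adj (Comp Adj D v) s) u) x}.ncard + 2 ≤
      {x | x ∈ Comp Adj D v ∧ ¬ IsSource Adj (Comp Adj D v) x}.ncard := by
  intro u hu
  set C := Comp Adj D v with hCd
  set R := Reach Adj C s with hRd
  set D' := C \ R with hD'd
  set C'' := Comp Adj D' u with hC''d
  have hC''D' : C'' ⊆ D' := comp_subset hu
  have hsub : {x | x ∈ C'' ∧ ¬ IsSource Adj C'' x} ⊆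
      {x | x ∈ C ∧ ¬ IsSource Adj C x} \ (R \ {s}) := by
    intro x hx
    have hxC : x ∈ C := (hC''D' hx.1).1
    refine ⟨⟨hxC, ?_⟩, ?_⟩
    · intro hsrcx
      exact hx.2 (isSource_of_subset (hC''D'.trans diff_subset) hx.1 hsrcx)
    · intro hcon
      exact (hC''D' hx.1).2 hcon.1
  have hRN : R \ {s} ⊆ {x | x ∈ C ∧ ¬ IsSource Adj C x} := by
    intro y hy
    exact ⟨reach_subset hsrc.1 hy.1, not_source_of_mem_reach hy.1 hy.2⟩
  have hdiff := Set.ncard_diff hRN (Set.toFinite _)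
  have hR1 : (R \ {s}).ncard = R.ncard - 1 :=
    Set.ncard_diff_singleton_of_mem (mem_reach_self (Adj := Adj) (A := C) (s := s))
  have hle := Set.ncard_le_ncard hsub (Set.toFinite _)
  have hle2 := Set.ncard_le_ncard hRN (Set.toFinite _)
  omega

lemma lemB [Finite V] (hacyc : Acyclic Adj) :
    ∀ n (D : Set V),
      (∀ v ∈ D, ∀ s, IsSource Adj (Comp Adj D v) s →
        (Reach Adj (Comp Adj D v) s).ncard ≤ 3) →
      (∀ v ∈ D, {x | x ∈ Comp Adj D v ∧ ¬ IsSource Adj (Comp Adj D v) x}.ncard ≤ 2 * n) →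
      dtdLE Adj D (n + 1) := by
  classical
  intro n
  induction n with
  | zero =>
    intro D _ hb
    apply dtdLE_one hacyc
    intro v hv
    have hempty : ∀ x ∈ Comp Adj D v, IsSource Adj (Comp Adj D v) x := by
      intro x hx
      by_contra hns
      have h0 := hb v hv
      have := (Set.ncard_pos (Set.toFinite _)).mpr
        (⟨x, hx, hns⟩ : {x | x ∈ Comp Adj D v ∧ ¬ IsSource Adj (Comp Adj D v) x}.Nonempty)
      omega
    have hCv : Comp Adj D v = {v} := by
      apply subset_antisymm
      · have hclosed : ∀ p ∈ ({v} : Set V), ∀ q, symAdj Adj (Comp Adj D v) p q →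
            q ∈ ({v} : Set V) := by
          intro p hp q hq
          rw [mem_singleton_iff] at hp; subst hp
          rcases hq with hq | hq
          · exact absurd hq.2.2 ((hempty q hq.2.1).2 p hq.1)
          · exact absurd hq.2.2 ((hempty p hq.2.1).2 q hq.1)
        have hseed : v ∈ ({v} : Set V) := rfl
        have hstep := comp_subset_of_closed hseed hclosed
        rw [comp_comp hv mem_comp_self] at hstep
        exact hstep
      · intro x hx; rw [mem_singleton_iff] at hx; subst hx; exact mem_comp_self
    refine ⟨v, ?_, ?_⟩ <;> rw [hCv]
    · refine ⟨rfl, fun w hw hadj => ?_⟩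
      rw [mem_singleton_iff] at hw; subst hw
      exact acyclic_irrefl hacyc _ hadj
    · intro x hx; rw [mem_singleton_iff] at hx; subst hx; exact mem_reach_self
  | succ n ih =>
    intro D hP hb
    have key : ∀ v ∈ D, ∃ s, IsSource Adj (Comp Adj D v) s ∧
        dtdLE Adj (Comp Adj D v \ Reach Adj (Comp Adj D v) s) (n + 1) := by
      intro v hv
      by_cases h3 : ∃ s, IsSource Adj (Comp Adj D v) s ∧
          3 ≤ (Reach Adj (Comp Adj D v) s).ncard
      · obtain ⟨s, hsrc, hr3⟩ := h3
        refine ⟨s, hsrc, ?_⟩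
        apply ih
        · intro u hu s' hs'
          have hs'C := source_of_sub hv hu hs'
          have hsubset : Comp Adj (Comp Adj D v \ Reach Adj (Comp Adj D v) s) u ⊆
              Comp Adj D v := (comp_subset hu).trans diff_subset
          exact le_trans (Set.ncard_le_ncard (reach_mono hsubset) (Set.toFinite _))
            (hP v hv s' hs'C)
        · intro u hu
          have h2 := nonsrc_sub hv hsrc hr3 u hu
          have := hb v hv
          omega
      · push_neg at h3
        obtain ⟨s, hsrc⟩ := exists_source hacyc ⟨v, mem_comp_self⟩
        refine ⟨s, hsrc, ?_⟩
        have h2 : ∀ s', IsSource Adj (Comp Adj D v) s' →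
            (Reach Adj (Comp Adj D v) s').ncard ≤ 2 := by
          intro s' hs'
          have := h3 s' hs'
          omega
        exact dtdLE_mono (dtdLE_one_of_singletons hacyc (star_comp hacyc hv h2 hsrc))
          (by omega)
    choose f hf using key
    refine dtdLE.step D (n + 1) (fun v => if h : v ∈ D then f v h else v) ?_ ?_
    · intro v hv; simp only [dif_pos hv]; exact (hf v hv).1
    · intro v hv; simp only [dif_pos hv]; exact (hf v hv).2

lemma main_lemma [Finite V] (hacyc : Acyclic Adj) :
    ∀ k (A : Set V), A.ncard ≤ k → dtdLE Adj A (A.ncard / 4 + 2) := by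
  classical
  intro k
  induction k with
  | zero =>
    intro A hA
    have hAe : A = ∅ := (Set.ncard_eq_zero (Set.toFinite _)).mp (by omega)
    rw [hAe]
    exact .empty _
  | succ k ih =>
    intro A hA
    rcases Set.eq_empty_or_nonempty A with rfl | _
    · exact .empty _
    have key : ∀ v ∈ A, ∃ s, IsSource Adj (Comp Adj A v) s ∧
        dtdLE Adj (Comp Adj A v \ Reach Adj (Comp Adj A v) s) (A.ncard / 4 + 1) := by
      intro v hv
      by_cases h4 : ∃ s, IsSource Adj (Comp Adj A v) s ∧
          4 ≤ (Reach Adj (Comp Adj A v) s).ncard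
      · obtain ⟨s, hsrc, hr4⟩ := h4
        refine ⟨s, hsrc, ?_⟩
        have hRA : Reach Adj (Comp Adj A v) s ⊆ A :=
          (reach_subset hsrc.1).trans (comp_subset hv)
        have hDA : Comp Adj A v \ Reach Adj (Comp Adj A v) s ⊆
            A \ Reach Adj (Comp Adj A v) s := diff_subset_diff_left (comp_subset hv)
        have hcard := Set.ncard_diff hRA (Set.toFinite _)
        have hle0 := Set.ncard_le_ncard hDA (Set.toFinite _)
        have h4A : 4 ≤ A.ncard := le_trans hr4 (Set.ncard_le_ncard hRA (Set.toFinite _))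
        have hle : (Comp Adj A v \ Reach Adj (Comp Adj A v) s).ncard ≤ A.ncard - 4 := by
          omega
        have hrec := ih (Comp Adj A v \ Reach Adj (Comp Adj A v) s) (by omega)
        apply dtdLE_mono hrec
        have hdiv : (Comp Adj A v \ Reach Adj (Comp Adj A v) s).ncard / 4 ≤
            (A.ncard - 4) / 4 := Nat.div_le_div_right hle
        have heq : (A.ncard - 4) / 4 + 1 = A.ncard / 4 := by
          rw [← Nat.add_div_right _ (by norm_num : 0 < 4)]
          congr 1
          omega
        omega
      · push_neg at h4
        have h3' : ∀ s, IsSource Adj (Comp Adj A v) s →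
            (Reach Adj (Comp Adj A v) s).ncard ≤ 3 := by
          intro s hs
          have := h4 s hs
          omega
        by_cases h3 : ∃ s, IsSource Adj (Comp Adj A v) s ∧
            3 ≤ (Reach Adj (Comp Adj A v) s).ncard
        · obtain ⟨s, hsrc, hr3⟩ := h3
          refine ⟨s, hsrc, ?_⟩
          have hcnt := count hacyc hv h3'
          have hdisj : Disjoint {x | x ∈ Comp Adj A v ∧ IsSource Adj (Comp Adj A v) x}
              {x | x ∈ Comp Adj A v ∧ ¬ IsSource Adj (Comp Adj A v) x} := by
            rw [Set.disjoint_left]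
            rintro a ⟨_, h1⟩ ⟨_, h2⟩
            exact h2 h1
          have hunion : {x | x ∈ Comp Adj A v ∧ IsSource Adj (Comp Adj A v) x} ∪
              {x | x ∈ Comp Adj A v ∧ ¬ IsSource Adj (Comp Adj A v) x} = Comp Adj A v := by
            ext x
            constructor
            · rintro (h | h) <;> exact h.1
            · intro hx
              by_cases hsx : IsSource Adj (Comp Adj A v) x
              · exact Or.inl ⟨hx, hsx⟩
              · exact Or.inr ⟨hx, hsx⟩
          have hpart := Set.ncard_union_eq hdisj (Set.toFinite _) (Set.toFinite _)
          rw [hunion] at hpart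
          have hCA : (Comp Adj A v).ncard ≤ A.ncard :=
            Set.ncard_le_ncard (comp_subset hv) (Set.toFinite _)
          have hmod := Nat.div_add_mod A.ncard 4
          have hmodlt : A.ncard % 4 < 4 := Nat.mod_lt _ (by norm_num)
          apply lemB hacyc (A.ncard / 4)
          · intro u hu s' hs'
            have hs'C := source_of_sub hv hu hs'
            have hsubset : Comp Adj (Comp Adj A v \ Reach Adj (Comp Adj A v) s) u ⊆
                Comp Adj A v := (comp_subset hu).trans diff_subset
            exact le_trans (Set.ncard_le_ncard (reach_mono hsubset) (Set.toFinite _))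
              (h3' s' hs'C)
          · intro u hu
            have h2 := nonsrc_sub hv hsrc hr3 u hu
            omega
        · push_neg at h3
          obtain ⟨s, hsrc⟩ := exists_source hacyc ⟨v, mem_comp_self⟩
          refine ⟨s, hsrc, ?_⟩
          have h2 : ∀ s', IsSource Adj (Comp Adj A v) s' →
              (Reach Adj (Comp Adj A v) s').ncard ≤ 2 := by
            intro s' hs'
            have := h3 s' hs'
            omega
          exact dtdLE_mono (dtdLE_one_of_singletons hacyc (star_comp hacyc hv h2 hsrc))
            (by omega)
    choose f hf using key
    have hform : A.ncard / 4 + 2 = (A.ncard / 4 + 1) + 1 := rfl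
    rw [hform]
    refine dtdLE.step A (A.ncard / 4 + 1) (fun v => if h : v ∈ A then f v h else v) ?_ ?_
    · intro v hv; simp only [dif_pos hv]; exact (hf v hv).1
    · intro v hv; simp only [dif_pos hv]; exact (hf v hv).2

end Helpers

/-- a DAG with `k` vertices has dtd ≤ ⌊k/4⌋ + 2. -/
theorem dtd_le_card_div_four {V : Type*} [Fintype V] (Adj : V → V → Prop)
    (hacyc : Acyclic Adj) : dtd Adj ≤ Fintype.card V / 4 + 2 := by
  have h := main_lemma hacyc (Set.univ : Set V).ncard Set.univ le_rfl
  rw [Set.ncard_univ, Nat.card_eq_fintype_card] at h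
  exact Nat.sInf_le h

end DagPaper
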